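/- arXiv:math/0702220 — 5 statements merged into one kernel-verified Lean document; each statement's English description precedes it below -/
import Mathlib

section
/- Let P be a complex polynomial of degree d ≥ 2 with zeros z_1,…,z_d (with multiplicity) and let w_1,…,w_{d-1} be the zeros of P' (with multiplicity). Then for any convex function f : ℂ → ℝ, d · Σ_{j=1}^{d-1} f(w_j) ≤ (d-1) · Σ_{i=1}^{d} f(z_i). -/
/-!
Let `z : Fin (n + 1) → ℂ` list the roots of `P` and let `U` be a unitary matrix whose first column
is the flat unit vector `(n + 1)^(-1/2) • (1, …, 1)`. Deleting the first row and column of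
`U⋆ diag(z) U` leaves a matrix `D` whose characteristic polynomial, an entry of the adjugate of
the characteristic matrix, is `(n + 1)⁻¹ • (∏ᵢ (X - zᵢ))'`; so the roots `wⱼ` of `P'` are the
eigenvalues of `D`. A Schur triangularisation `D = V T V⋆` exhibits them as the diagonal entries of
`R⋆ diag(z) R`, where `R` is the last `n` columns of `U` times `V`. Hence `wⱼ = ∑ᵢ |Rᵢⱼ|² zᵢ` is a
convex combination of the roots, while `∑ⱼ |Rᵢⱼ|² = 1 - (n + 1)⁻¹` for every `i`, and Jensen's
inequality summed over `j` gives the claim.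
-/

open Polynomial
open scoped Matrix

namespace Matrix

section Charpoly

variable {n R : Type*} [Fintype n] [DecidableEq n] [CommRing R]

theorem charmatrix_conj_of_mul_eq_one {U V : Matrix n n R} (h : V * U = 1) (M : Matrix n n R) :
    charmatrix (V * M * U) = C.mapMatrix V * charmatrix M * C.mapMatrix U := by
  have hC : C.mapMatrix V * C.mapMatrix U = (1 : Matrix n n R[X]) := by rw [← map_mul, h, map_one]
  rw [charmatrix, charmatrix, Matrix.mul_sub, Matrix.sub_mul,
    ← (scalar_commute X (fun r => Commute.all _ r) _).eq, Matrix.mul_assoc (scalar n X), hC,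
    Matrix.mul_one, map_mul, map_mul]

theorem adjugate_conj_of_mul_eq_one {U V : Matrix n n R} (h : V * U = 1) (N : Matrix n n R) :
    adjugate (V * N * U) = V * adjugate N * U := by
  have hU : adjugate U = U.det • V := by
    rw [← Matrix.mul_one (adjugate U), ← mul_eq_one_comm.mp h, ← Matrix.mul_assoc, adjugate_mul,
      smul_one_mul]
  have hV : adjugate V = V.det • U := by
    rw [← Matrix.mul_one (adjugate V), ← h, ← Matrix.mul_assoc, adjugate_mul, smul_one_mul]
  have hdet : V.det * U.det = 1 := by rw [← det_mul, h, det_one]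
  rw [adjugate_mul_distrib, adjugate_mul_distrib, hU, hV]
  simp only [Matrix.mul_smul, Matrix.smul_mul, smul_smul, hdet, one_smul, Matrix.mul_assoc]

theorem charpoly_submatrix_succ {k : ℕ} (M : Matrix (Fin (k + 1)) (Fin (k + 1)) R) :
    (M.submatrix Fin.succ Fin.succ).charpoly = M.charmatrix.adjugate 0 0 := by
  rw [adjugate_fin_succ_eq_det_submatrix, Fin.succAbove_zero, charpoly]
  simp only [Fin.val_zero, add_zero, pow_zero, one_mul]
  congr 1
  ext i j
  simp [charmatrix_apply, diagonal_apply]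

theorem charpoly_submatrix_succ_unitary_conj_diagonal [StarRing R] {k : ℕ}
    {U : Matrix (Fin (k + 1)) (Fin (k + 1)) R} (hU : U ∈ unitaryGroup (Fin (k + 1)) R)
    (z : Fin (k + 1) → R) :
    ((star U * diagonal z * U).submatrix Fin.succ Fin.succ).charpoly =
      ∑ i, C (star (U i 0) * U i 0) * ∏ j ∈ Finset.univ.erase i, (X - C (z j)) := by
  have hU' := mem_unitaryGroup_iff'.mp hU
  have hCU : C.mapMatrix (star U) * C.mapMatrix U = 1 := by rw [← map_mul, hU', map_one]
  rw [charpoly_submatrix_succ, charmatrix_conj_of_mul_eq_one hU', adjugate_conj_of_mul_eq_one hCU,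
    charmatrix_diagonal, adjugate_diagonal]
  simp only [RingHom.mapMatrix_apply, mul_apply, map_apply, star_apply, diagonal_apply, mul_ite,
    mul_zero, Finset.sum_ite_eq', Finset.mem_univ, ↓reduceIte, map_mul]
  exact Finset.sum_congr rfl fun i _ => by ring

theorem roots_charpoly_eq_diag_of_isUpperTriangular [LinearOrder n] [IsDomain R] [StarRing R]
    {D V : Matrix n n R} (hV : V ∈ unitaryGroup n R)
    (hT : (star V * D * V).IsUpperTriangular) :
    D.charpoly.roots = Finset.univ.val.map fun j => (star V * D * V) j j := by
  have hchar : (star V * D * V).charpoly = D.charpoly := by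
    rw [charpoly_mul_comm, ← Matrix.mul_assoc, mem_unitaryGroup_iff.mp hV, Matrix.one_mul]
  rw [← hchar, charpoly_of_isUpperTriangular _ hT, Finset.prod_eq_multiset_prod,
    ← roots_multiset_prod_X_sub_C (Finset.univ.val.map fun j => (star V * D * V) j j),
    Multiset.map_map]
  rfl

end Charpoly

section NormSq

variable {m k : Type*}

theorem conjTranspose_mul_self_apply_self [Fintype m] (M : Matrix m k ℂ) (j : k) :
    (Mᴴ * M) j j = ((∑ i, Complex.normSq (M i j) : ℝ) : ℂ) := by
  simp [mul_apply, Complex.normSq_eq_conj_mul_self]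

theorem mul_conjTranspose_self_apply_self [Fintype k] (M : Matrix m k ℂ) (i : m) :
    (M * Mᴴ) i i = ((∑ j, Complex.normSq (M i j) : ℝ) : ℂ) := by
  simp [mul_apply, Complex.mul_conj]

theorem sum_normSq_row_mul_unitary [Fintype k] [DecidableEq k] (M : Matrix m k ℂ)
    {V : Matrix k k ℂ} (hV : V ∈ unitaryGroup k ℂ) (i : m) :
    ∑ j, Complex.normSq ((M * V) i j) = ∑ j, Complex.normSq (M i j) := by
  have h : (M * V) * (M * V)ᴴ = M * Mᴴ := by
    rw [conjTranspose_mul, Matrix.mul_assoc, ← Matrix.mul_assoc V, ← star_eq_conjTranspose,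
      mem_unitaryGroup_iff.mp hV, Matrix.one_mul]
  exact_mod_cast (mul_conjTranspose_self_apply_self _ i).symm.trans
    ((congrFun (congrFun h i) i).trans (mul_conjTranspose_self_apply_self M i))

theorem diag_conjTranspose_mul_diagonal_mul [Fintype m] [DecidableEq m] (M : Matrix m k ℂ)
    (z : m → ℂ) (j : k) : (Mᴴ * diagonal z * M) j j = ∑ i, Complex.normSq (M i j) • z i := by
  rw [mul_apply]
  simp only [mul_diagonal, conjTranspose_apply, Complex.real_smul,
    Complex.normSq_eq_conj_mul_self, RCLike.star_def]
  exact Finset.sum_congr rfl fun i _ => by ring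

theorem sum_convexOn_diag_conj_diagonal_le [Fintype m] [DecidableEq m] [Fintype k]
    [DecidableEq k] {M : Matrix m k ℂ} (hM : Mᴴ * M = 1) {s : Set ℂ} {f : ℂ → ℝ}
    (hf : ConvexOn ℝ s f) {z : m → ℂ} (hz : ∀ i, z i ∈ s) :
    ∑ j, f ((Mᴴ * diagonal z * M) j j) ≤ ∑ i, (∑ j, Complex.normSq (M i j)) * f (z i) :=
  calc ∑ j, f ((Mᴴ * diagonal z * M) j j)
      ≤ ∑ j, ∑ i, Complex.normSq (M i j) • f (z i) := Finset.sum_le_sum fun j _ => by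
        have hcol := conjTranspose_mul_self_apply_self M j
        rw [hM, one_apply_eq] at hcol
        rw [diag_conjTranspose_mul_diagonal_mul]
        exact hf.map_sum_le (fun i _ => Complex.normSq_nonneg _) (by exact_mod_cast hcol.symm)
          fun i _ => hz i
    _ = ∑ i, (∑ j, Complex.normSq (M i j)) * f (z i) := by
        rw [Finset.sum_comm]; simp [Finset.sum_mul]

end NormSq

section Schur

theorem exists_mem_unitaryGroup_col_eq {ι : Type*} [Fintype ι] [DecidableEq ι]
    {v : EuclideanSpace ℂ ι} (hv : ‖v‖ = 1) (j : ι) :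
    ∃ U ∈ unitaryGroup ι ℂ, ∀ i, U i j = v i := by
  have hON : Orthonormal ℂ (({j} : Set ι).domRestrict fun _ => v) := by
    refine orthonormal_iff_ite.mpr fun a b => ?_
    rw [Subsingleton.elim a b]
    simp [inner_self_eq_norm_sq_to_K, hv]
  obtain ⟨b, hb⟩ := hON.exists_orthonormalBasis_extension_of_card_eq (by simp)
  refine ⟨(EuclideanSpace.basisFun ι ℂ).toBasis.toMatrix b,
    (EuclideanSpace.basisFun ι ℂ).toMatrix_orthonormalBasis_mem_unitary b, fun i => ?_⟩
  rw [Module.Basis.toMatrix_apply, OrthonormalBasis.coe_toBasis_repr_apply,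
    EuclideanSpace.basisFun_repr, hb j rfl]

theorem exists_mem_unitaryGroup_normSq_col_eq_inv_card {ι : Type*} [Fintype ι] [DecidableEq ι]
    (j : ι) : ∃ U ∈ unitaryGroup ι ℂ, ∀ i, Complex.normSq (U i j) = (Fintype.card ι : ℝ)⁻¹ := by
  set c : ℝ := (√(Fintype.card ι))⁻¹
  have hc : c * c = (Fintype.card ι : ℝ)⁻¹ := by
    rw [← mul_inv, Real.mul_self_sqrt (Nat.cast_nonneg _)]
  have hcard : (Fintype.card ι : ℝ) ≠ 0 := Nat.cast_ne_zero.mpr (Fintype.card_pos_iff.mpr ⟨j⟩).ne'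
  have hv : ‖WithLp.toLp 2 fun _ : ι => (c : ℂ)‖ = 1 := by
    simp [EuclideanSpace.norm_eq, sq, hc, hcard]
  obtain ⟨U, hU, hUj⟩ := exists_mem_unitaryGroup_col_eq hv j
  exact ⟨U, hU, fun i => by simp [hUj, hc]⟩

theorem exists_norm_eq_one_mulVec_eq_smul {ι : Type*} [Fintype ι] [DecidableEq ι] [Nonempty ι]
    (A : Matrix ι ι ℂ) :
    ∃ μ : ℂ, ∃ u : EuclideanSpace ℂ ι, ‖u‖ = 1 ∧ A *ᵥ u.ofLp = μ • u.ofLp := by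
  obtain ⟨μ, hμ⟩ := Module.End.exists_eigenvalue (toLin' A)
  obtain ⟨x, hx⟩ := hμ.exists_hasEigenvector
  have hx0 : WithLp.toLp 2 x ≠ 0 := by simpa using hx.2
  refine ⟨μ, (‖WithLp.toLp 2 x‖⁻¹ : ℂ) • WithLp.toLp 2 x, norm_smul_inv_norm hx0, ?_⟩
  have hAx := hx.apply_eq_smul
  rw [toLin'_apply] at hAx
  rw [WithLp.ofLp_smul, mulVec_smul, hAx, smul_comm]

variable {R : Type*} [CommRing R] [StarRing R] {n : ℕ}

def blockDiagOne (V : Matrix (Fin n) (Fin n) R) : Matrix (Fin (n + 1)) (Fin (n + 1)) R :=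
  of (Fin.cons (Fin.cons 1 0) fun i => Fin.cons 0 (V i))

theorem conj_blockDiagOne_apply_succ_zero (V : Matrix (Fin n) (Fin n) R)
    {B : Matrix (Fin (n + 1)) (Fin (n + 1)) R} (hB : ∀ i : Fin n, B i.succ 0 = 0) (i : Fin n) :
    (star (blockDiagOne V) * B * blockDiagOne V) i.succ 0 = 0 := by
  simp [blockDiagOne, mul_apply, Fin.sum_univ_succ, hB]

theorem conj_blockDiagOne_apply_succ_succ (V : Matrix (Fin n) (Fin n) R)
    (B : Matrix (Fin (n + 1)) (Fin (n + 1)) R) (i j : Fin n) :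
    (star (blockDiagOne V) * B * blockDiagOne V) i.succ j.succ =
      (star V * B.submatrix Fin.succ Fin.succ * V) i j := by
  simp [blockDiagOne, mul_apply, Fin.sum_univ_succ]

theorem blockDiagOne_mem_unitaryGroup {V : Matrix (Fin n) (Fin n) R}
    (hV : V ∈ unitaryGroup (Fin n) R) : blockDiagOne V ∈ unitaryGroup (Fin (n + 1)) R := by
  rw [mem_unitaryGroup_iff'] at hV ⊢
  ext i j
  refine Fin.cases (Fin.cases ?_ (fun j => ?_) j) (fun i => Fin.cases ?_ (fun j => ?_) j) i
  · simp [blockDiagOne, mul_apply, Fin.sum_univ_succ]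
  · simp [blockDiagOne, mul_apply, Fin.sum_univ_succ, (Fin.succ_ne_zero j).symm]
  · simp [blockDiagOne, mul_apply, Fin.sum_univ_succ, Fin.succ_ne_zero i]
  · simpa [submatrix_one _ (Fin.succ_injective _), hV, one_apply] using
      conj_blockDiagOne_apply_succ_succ V 1 i j

theorem exists_mem_unitaryGroup_isUpperTriangular :
    ∀ {n : ℕ} (A : Matrix (Fin n) (Fin n) ℂ),
      ∃ V ∈ unitaryGroup (Fin n) ℂ, (star V * A * V).IsUpperTriangular
  | 0, _ => ⟨1, one_mem _, fun i => i.elim0⟩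
  | n + 1, A => by
    obtain ⟨μ, u, hu, hAu⟩ := exists_norm_eq_one_mulVec_eq_smul A
    obtain ⟨U, hU, hU0⟩ := exists_mem_unitaryGroup_col_eq hu 0
    set B := star U * A * U
    have hB : ∀ i : Fin n, B i.succ 0 = 0 := fun i => by
      have hAU : ∀ k, (A * U) k 0 = μ * U k 0 := fun k => by
        simpa [hU0, mulVec, dotProduct, mul_apply] using congrFun hAu k
      have : B i.succ 0 = μ * (star U * U) i.succ 0 := by
        simp only [B, Matrix.mul_assoc, mul_apply (M := star U), hAU, Finset.mul_sum]
        exact Finset.sum_congr rfl fun k _ => by ring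
      rw [this, mem_unitaryGroup_iff'.mp hU, one_apply_ne (Fin.succ_ne_zero i), mul_zero]
    obtain ⟨V, hV, hT⟩ := exists_mem_unitaryGroup_isUpperTriangular (B.submatrix Fin.succ Fin.succ)
    refine ⟨U * blockDiagOne V, mul_mem hU (blockDiagOne_mem_unitaryGroup hV), ?_⟩
    have hconj : star (U * blockDiagOne V) * A * (U * blockDiagOne V) =
        star (blockDiagOne V) * B * blockDiagOne V := by
      simp only [B, star_mul, Matrix.mul_assoc]
    intro i j hji
    rw [hconj]
    induction i using Fin.cases with
    | zero => exact absurd hji (Fin.not_lt_zero j)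
    | succ i =>
      induction j using Fin.cases with
      | zero => exact conj_blockDiagOne_apply_succ_zero V hB i
      | succ j =>
        rw [conj_blockDiagOne_apply_succ_succ]
        exact hT (Fin.succ_lt_succ_iff.mp hji)

end Schur

end Matrix

open Matrix

namespace Polynomial

theorem exists_isometry_roots_derivative_prod_eq_diag {n : ℕ} (z : Fin (n + 1) → ℂ) :
    ∃ R : Matrix (Fin (n + 1)) (Fin n) ℂ, Rᴴ * R = 1 ∧
      (∀ i, ∑ j, Complex.normSq (R i j) = 1 - ((n : ℝ) + 1)⁻¹) ∧
      (derivative (∏ i, (X - C (z i)))).roots =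
        Finset.univ.val.map fun j => (Rᴴ * diagonal z * R) j j := by
  obtain ⟨U, hU, hU0⟩ := exists_mem_unitaryGroup_normSq_col_eq_inv_card (0 : Fin (n + 1))
  simp only [Fintype.card_fin, Nat.cast_add, Nat.cast_one] at hU0
  set D := (star U * diagonal z * U).submatrix Fin.succ Fin.succ
  have hD : D.charpoly = C ((n + 1 : ℂ)⁻¹) * derivative (∏ i, (X - C (z i))) := by
    rw [charpoly_submatrix_succ_unitary_conj_diagonal hU, derivative_prod_finset, Finset.mul_sum]
    refine Finset.sum_congr rfl fun i _ => ?_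
    rw [derivative_X_sub_C, mul_one, RCLike.star_def, ← Complex.normSq_eq_conj_mul_self, hU0 i]
    push_cast
    rfl
  obtain ⟨V, hV, hT⟩ := exists_mem_unitaryGroup_isUpperTriangular D
  set Q := U.submatrix id Fin.succ
  have hQ : Qᴴ * Q = 1 := by
    rw [conjTranspose_submatrix, ← submatrix_mul _ _ _ _ _ Function.bijective_id,
      ← star_eq_conjTranspose, mem_unitaryGroup_iff'.mp hU, submatrix_one _ (Fin.succ_injective _)]
  have hQD : Qᴴ * diagonal z * Q = D := by
    rw [conjTranspose_submatrix, ← submatrix_id_id (diagonal z),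
      ← submatrix_mul _ _ _ _ _ Function.bijective_id,
      ← submatrix_mul _ _ _ _ _ Function.bijective_id]
    rfl
  refine ⟨Q * V, ?_, fun i => ?_, ?_⟩
  · rw [conjTranspose_mul, Matrix.mul_assoc, ← Matrix.mul_assoc Qᴴ, hQ, Matrix.one_mul,
      ← star_eq_conjTranspose, mem_unitaryGroup_iff'.mp hV]
  · have hrow : (1 : ℝ) = ((n : ℝ) + 1)⁻¹ + ∑ j : Fin n, Complex.normSq (U i j.succ) := by
      have h := mul_conjTranspose_self_apply_self U i
      rw [← star_eq_conjTranspose, mem_unitaryGroup_iff.mp hU, one_apply_eq, Fin.sum_univ_succ,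
        hU0 i] at h
      exact_mod_cast h
    rw [sum_normSq_row_mul_unitary _ hV]
    simp only [Q, submatrix_apply, id]
    linarith
  · rw [← roots_C_mul _ (inv_ne_zero (by norm_cast : (n + 1 : ℂ) ≠ 0)), ← hD,
      roots_charpoly_eq_diag_of_isUpperTriangular hV hT, conjTranspose_mul, ← hQD]
    simp only [star_eq_conjTranspose, Matrix.mul_assoc]

theorem sum_map_roots_derivative_prod_le {n : ℕ} (z : Fin (n + 1) → ℂ) {s : Set ℂ}
    {f : ℂ → ℝ} (hf : ConvexOn ℝ s f) (hz : ∀ i, z i ∈ s) :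
    ((n : ℝ) + 1) * ((derivative (∏ i, (X - C (z i)))).roots.map f).sum ≤ n * ∑ i, f (z i) := by
  obtain ⟨R, hR, hrow, hroots⟩ := exists_isometry_roots_derivative_prod_eq_diag z
  rw [hroots, Multiset.map_map]
  calc ((n : ℝ) + 1) * ∑ j, f ((Rᴴ * diagonal z * R) j j)
      ≤ ((n : ℝ) + 1) * ∑ i, (1 - ((n : ℝ) + 1)⁻¹) * f (z i) := by
        gcongr
        simpa only [hrow] using sum_convexOn_diag_conj_diagonal_le hR hf hz
    _ = n * ∑ i, f (z i) := by
        rw [← Finset.mul_sum]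
        field_simp
        ring

end Polynomial

theorem Multiset.exists_fin_map_eq_of_card_eq {α : Type*} {s : Multiset α} {k : ℕ}
    (h : Multiset.card s = k) : ∃ z : Fin k → α, Finset.univ.val.map z = s := by
  subst h
  induction s using Quotient.inductionOn with
  | h l => exact ⟨l.get, (Fin.univ_val_map l.get).trans (congrArg _ (List.ofFn_get l))⟩

theorem derivative_roots_majorized_general (P : Polynomial ℂ)
    (f : ℂ → ℝ) (hf : ConvexOn ℝ Set.univ f) :
    (P.natDegree : ℝ) * ((P.derivative.roots.map f).sum) ≤
      ((P.natDegree : ℝ) - 1) * ((P.roots.map f).sum) := by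
  have hcard : Multiset.card P.roots = P.natDegree := IsAlgClosed.card_roots_eq_natDegree
  cases hdeg : P.natDegree with
  | zero => simp [derivative_of_natDegree_zero hdeg, Multiset.card_eq_zero.mp (hcard.trans hdeg)]
  | succ n =>
    obtain ⟨z, hz⟩ := Multiset.exists_fin_map_eq_of_card_eq (hcard.trans hdeg)
    have hP : C P.leadingCoeff * ∏ i, (X - C (z i)) = P := by
      conv_rhs => rw [← C_leadingCoeff_mul_prod_multiset_X_sub_C hcard, ← hz, Multiset.map_map]
      rfl
    have hlc : P.leadingCoeff ≠ 0 := leadingCoeff_ne_zero.mpr (by rintro rfl; simp at hdeg)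
    rw [← hP, derivative_C_mul, roots_C_mul _ hlc, hP, ← hz, Multiset.map_map]
    push_cast
    rw [add_sub_cancel_right]
    exact sum_map_roots_derivative_prod_le z hf fun _ => Set.mem_univ _

theorem derivative_roots_majorized (P : Polynomial ℂ) (hd : 2 ≤ P.natDegree)
    (f : ℂ → ℝ) (hf : ConvexOn ℝ Set.univ f) :
    (P.natDegree : ℝ) * ((P.derivative.roots.map f).sum) ≤
      ((P.natDegree : ℝ) - 1) * ((P.roots.map f).sum) :=
  derivative_roots_majorized_general P f hf
end

section
/- Let m ≥ 2, let z_1,…,z_m ∈ ℂ be points not all equal, let τ_1,…,τ_m > 0 with Σ τ_i = 1, and let Φ(z) = Σ_{i=1}^m τ_i/(z - z_i). Let w_1,…,w_{m-1} denote the zeros of Φ, where a point z_i occurring exactly m_i times in the list counts as a zero of Φ with multiplicity m_i - 1. Then for any convex function f : ℂ → ℝ, Σ_{j=1}^{m-1} f(w_j) ≤ Σ_{i=1}^{m} (1 - τ_i) f(z_i). -/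
/-!
With `u = (√τᵢ)ᵢ` a unit vector, `∑ τᵢ ∏_{l ≠ i} (X - z_l)` is the characteristic polynomial of
the compression of `D = diag z` to `u^⊥`: in a unitary `W` with first column `u`, it is the `(0,0)`
cofactor of `Wᴴ (x - D) W`, i.e. `det (x - D) · ⟪u, (x - D)⁻¹ u⟫`. Triangularizing that compression
in an orthonormal basis `v₁, …, v_{m-1}` of `u^⊥` (Schur), its roots are the diagonal entries
`⟪vⱼ, D vⱼ⟫ = ∑ᵢ |vⱼ i|² zᵢ`, convex combinations of the `zᵢ`. Jensen's inequality then gives the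
bound, with weights `∑ⱼ |vⱼ i|² = 1 - τᵢ` because `u, v₁, …, v_{m-1}` is an orthonormal basis.
-/

open Polynomial Matrix Finset Module
open scoped InnerProductSpace EuclideanSpace

theorem Orthonormal.fin_cons {𝕜 E : Type*} [RCLike 𝕜] [NormedAddCommGroup E]
    [InnerProductSpace 𝕜 E] {n : ℕ} {x : E} {v : Fin n → E} (hv : Orthonormal 𝕜 v)
    (hx : ‖x‖ = 1) (hxv : ∀ j, ⟪x, v j⟫_𝕜 = 0) :
    Orthonormal 𝕜 (Fin.cons x v : Fin (n + 1) → E) := by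
  rw [orthonormal_iff_ite] at hv ⊢
  intro i j
  cases i using Fin.cases <;> cases j using Fin.cases
  · simp [inner_self_eq_norm_sq_to_K, hx]
  · simp [hxv, (Fin.succ_ne_zero _).symm]
  · simp [inner_eq_zero_symm.mp (hxv _)]
  · simp [hv, Fin.succ_inj]

section Schur

variable {E : Type*} [NormedAddCommGroup E] [InnerProductSpace ℂ E]

theorem LinearMap.exists_unit_eigenvector_compression (L : E →ₗ[ℂ] E) (K : Submodule ℂ E)
    [FiniteDimensional ℂ K] [Nontrivial K] :
    ∃ x ∈ K, ‖x‖ = 1 ∧ ∀ w ∈ K, ⟪w, x⟫_ℂ = 0 → ⟪w, L x⟫_ℂ = 0 := by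
  obtain ⟨μ, hμ⟩ := Module.End.exists_eigenvalue
    (K.orthogonalProjectionOnto.toLinearMap ∘ₗ L ∘ₗ K.subtype)
  obtain ⟨y, hy⟩ := hμ.exists_hasEigenvector
  have hy0 : (y : E) ≠ 0 := by simpa using hy.2
  set x : K := (‖(y : E)‖⁻¹ : ℂ) • y
  have hLx : K.orthogonalProjectionOnto (L x) = μ • x := by
    have := hy.apply_eq_smul
    simp only [LinearMap.comp_apply, Submodule.subtype_apply, ContinuousLinearMap.coe_coe] at this
    simp only [x, Submodule.coe_smul, map_smul, this, smul_comm μ]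
  refine ⟨x, x.2, norm_smul_inv_norm hy0, fun w hw hwx => ?_⟩
  rw [← K.inner_orthogonalProjectionOnto_eq_of_mem_left ⟨w, hw⟩, hLx, inner_smul_right]
  simp [hwx]

/-- Schur triangularization of the compression of `L` to `K`. Stating it for every subspace lets
the induction pass to `K ⊓ xᗮ` while keeping `L` itself. -/
theorem LinearMap.exists_orthonormal_triangular (L : E →ₗ[ℂ] E) :
    ∀ (n : ℕ) (K : Submodule ℂ E), finrank ℂ K = n →
      ∃ v : Fin n → E, Orthonormal ℂ v ∧ (∀ j, v j ∈ K) ∧ ∀ j k, k < j → ⟪v j, L (v k)⟫_ℂ = 0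
  | 0, _, _ => ⟨Fin.elim0, orthonormal_iff_ite.2 fun i => i.elim0, fun j => j.elim0,
      fun j => j.elim0⟩
  | n + 1, K, hK => by
    have : FiniteDimensional ℂ K := Module.finite_of_finrank_eq_succ hK
    have : Nontrivial K := Module.nontrivial_of_finrank_eq_succ hK
    obtain ⟨x, hxK, hx, hLx⟩ := L.exists_unit_eigenvector_compression K
    have hK' : finrank ℂ ((ℂ ∙ x)ᗮ ⊓ K : Submodule ℂ E) = n :=
      Submodule.finrank_add_inf_finrank_orthogonal'
        ((Submodule.span_singleton_le_iff_mem _ _).2 hxK) <| by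
        rw [finrank_span_singleton (norm_ne_zero_iff.1 (hx ▸ one_ne_zero)), hK, add_comm]
    obtain ⟨v, hv, hvK, hLv⟩ := exists_orthonormal_triangular L n _ hK'
    have hxv : ∀ j, ⟪x, v j⟫_ℂ = 0 := fun j =>
      Submodule.mem_orthogonal_singleton_iff_inner_right.1 (hvK j).1
    refine ⟨Fin.cons x v, hv.fin_cons hx hxv, Fin.forall_fin_succ.2 ⟨hxK, fun j => (hvK j).2⟩, ?_⟩
    intro j k hkj
    cases j using Fin.cases with
    | zero => exact absurd hkj (Fin.not_lt_zero k)
    | succ j =>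
      cases k using Fin.cases with
      | zero => exact hLx _ (hvK j).2 (inner_eq_zero_symm.1 (hxv j))
      | succ k => exact hLv j k (Fin.succ_lt_succ_iff.1 hkj)

end Schur

theorem Matrix.conjTranspose_mul_mul_apply_eq_inner {𝕜 ι κ : Type*} [RCLike 𝕜] [Fintype ι]
    [DecidableEq ι] (b : κ → EuclideanSpace 𝕜 ι) (A : Matrix ι ι 𝕜) (j k : κ) :
    ((of fun i p => b p i)ᴴ * A * of fun i p => b p i) j k = ⟪b j, toEuclideanLin A (b k)⟫_𝕜 := by
  simp only [mul_apply, conjTranspose_apply, of_apply, sum_mul,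
    EuclideanSpace.inner_eq_star_dotProduct, toLpLin_apply, dotProduct, mulVec, Pi.star_apply]
  rw [sum_comm]
  refine sum_congr rfl fun p _ => sum_congr rfl fun q _ => by ring

theorem Matrix.exists_mem_unitaryGroup_apply_zero_isUpperTriangular {n : ℕ}
    (u : EuclideanSpace ℂ (Fin (n + 1))) (hu : ‖u‖ = 1)
    (A : Matrix (Fin (n + 1)) (Fin (n + 1)) ℂ) :
    ∃ W ∈ unitaryGroup (Fin (n + 1)) ℂ, (∀ i, W i 0 = u i) ∧
      ((Wᴴ * A * W).submatrix Fin.succ Fin.succ).IsUpperTriangular := by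
  obtain ⟨v, hv, hvu, hAv⟩ := (toEuclideanLin A).exists_orthonormal_triangular n (ℂ ∙ u)ᗮ
    (Submodule.finrank_orthogonal_span_singleton (norm_ne_zero_iff.1 (hu ▸ one_ne_zero)))
  set b : Fin (n + 1) → EuclideanSpace ℂ (Fin (n + 1)) := Fin.cons u v
  have hb : Orthonormal ℂ b :=
    hv.fin_cons hu fun j => Submodule.mem_orthogonal_singleton_iff_inner_right.1 (hvu j)
  refine ⟨of fun i p => b p i, ?_, fun i => rfl, fun j k hkj => ?_⟩
  · rw [mem_unitaryGroup_iff', star_eq_conjTranspose, ← Matrix.mul_one (of fun i p => b p i)ᴴ]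
    ext j k
    rw [conjTranspose_mul_mul_apply_eq_inner, one_apply, ← orthonormal_iff_ite.1 hb j k]
    simp
  · simpa [star_eq_conjTranspose, conjTranspose_mul_mul_apply_eq_inner, b] using hAv j k hkj

section UnitaryConjugation

theorem Matrix.det_submatrix_succ_succ {K : Type*} [Field K] {n : ℕ}
    (M : Matrix (Fin (n + 1)) (Fin (n + 1)) K) (hM : M.det ≠ 0) :
    (M.submatrix Fin.succ Fin.succ).det = M.det * M⁻¹ 0 0 := by
  rw [inv_def, smul_apply, smul_eq_mul, Ring.inverse_eq_inv', mul_inv_cancel_left₀ hM,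
    adjugate_fin_succ_eq_det_submatrix]
  simp

variable {K : Type*} [Field K] [StarRing K] {n : ℕ} {W : Matrix (Fin (n + 1)) (Fin (n + 1)) K}

theorem Matrix.det_submatrix_succ_conjTranspose_mul_diagonal_mul
    (hW : W ∈ unitaryGroup (Fin (n + 1)) K) {d : Fin (n + 1) → K} (hd : ∀ i, d i ≠ 0) :
    ((Wᴴ * diagonal d * W).submatrix Fin.succ Fin.succ).det =
      ∑ i, star (W i 0) * W i 0 * ∏ l ∈ univ.erase i, d l := by
  have hWW : Wᴴ * W = 1 := mem_unitaryGroup_iff'.1 hW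
  have hdet : (Wᴴ * diagonal d * W).det = ∏ i, d i := by
    rw [det_mul, det_mul, mul_right_comm, ← det_mul, hWW, det_one, one_mul, det_diagonal]
  have hinv : (Wᴴ * diagonal d * W)⁻¹ = Wᴴ * diagonal d⁻¹ * W := by
    refine inv_eq_right_inv ?_
    calc Wᴴ * diagonal d * W * (Wᴴ * diagonal d⁻¹ * W)
        = Wᴴ * (diagonal d * (W * Wᴴ) * diagonal d⁻¹) * W := by simp only [Matrix.mul_assoc]
      _ = 1 := by
        rw [show W * Wᴴ = 1 from mem_unitaryGroup_iff.1 hW, Matrix.mul_one, diagonal_mul_diagonal,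
          show (fun i => d i * d⁻¹ i) = fun _ => 1 from funext fun i => mul_inv_cancel₀ (hd i),
          diagonal_one, Matrix.mul_one, hWW]
  rw [det_submatrix_succ_succ _ (hdet ▸ prod_ne_zero_iff.2 fun i _ => hd i), hinv, hdet, mul_apply]
  simp only [mul_diagonal, conjTranspose_apply, Pi.inv_apply, mul_sum]
  refine sum_congr rfl fun i _ => ?_
  rw [← mul_prod_erase univ d (mem_univ i)]
  field_simp [hd i]

theorem Matrix.charpoly_submatrix_succ_conjTranspose_mul_diagonal_mul [Infinite K]
    (hW : W ∈ unitaryGroup (Fin (n + 1)) K) (z : Fin (n + 1) → K) :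
    ((Wᴴ * diagonal z * W).submatrix Fin.succ Fin.succ).charpoly =
      ∑ i, C (star (W i 0) * W i 0) * ∏ l ∈ univ.erase i, (X - C (z l)) := by
  refine eq_of_infinite_eval_eq _ _ ((Set.finite_range z).infinite_compl.mono fun x hx => ?_)
  have hxz : ∀ i, x - z i ≠ 0 := fun i => sub_ne_zero.2 fun h => hx ⟨i, h.symm⟩
  have hshift : scalar (Fin n) x - (Wᴴ * diagonal z * W).submatrix Fin.succ Fin.succ =
      (Wᴴ * diagonal (fun i => x - z i) * W).submatrix Fin.succ Fin.succ := by
    rw [show diagonal (fun i => x - z i) = scalar (Fin (n + 1)) x - diagonal z by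
        rw [scalar_apply, diagonal_sub],
      Matrix.mul_sub, Matrix.sub_mul, ← (scalar_commute x (fun _ => Commute.all _ _) _).eq,
      Matrix.mul_assoc (scalar _ x), show Wᴴ * W = 1 from mem_unitaryGroup_iff'.1 hW,
      Matrix.mul_one]
    ext i j
    simp [diagonal_apply]
  rw [Set.mem_ofPred_eq, eval_charpoly, hshift,
    det_submatrix_succ_conjTranspose_mul_diagonal_mul hW hxz]
  simp [eval_finsetSum, eval_prod]

end UnitaryConjugation

theorem Matrix.IsUpperTriangular.roots_charpoly {R n : Type*} [CommRing R] [IsDomain R]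
    [Fintype n] [DecidableEq n] [LinearOrder n] {M : Matrix n n R} (hM : M.IsUpperTriangular) :
    M.charpoly.roots = univ.val.map M.diag := by
  rw [charpoly_of_isUpperTriangular M hM, prod_eq_multiset_prod]
  simpa [Multiset.map_map, Function.comp_def] using
    roots_multiset_prod_X_sub_C (univ.val.map M.diag)

theorem Matrix.conjTranspose_mul_diagonal_mul_apply_self {R ι κ : Type*} [CommSemiring R]
    [StarRing R] [Fintype ι] [DecidableEq ι] (W : Matrix ι κ R) (z : ι → R) (j : κ) :
    (Wᴴ * diagonal z * W) j j = ∑ p, star (W p j) * W p j * z p := by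
  rw [mul_apply]
  simp only [mul_diagonal, conjTranspose_apply]
  exact sum_congr rfl fun p _ => by ring

section UnitaryComplex

variable {ι : Type*} [Fintype ι] [DecidableEq ι] {W : Matrix ι ι ℂ}

theorem Matrix.sum_normSq_apply_right_eq_one (hW : W ∈ unitaryGroup ι ℂ) (i : ι) :
    ∑ j, Complex.normSq (W i j) = 1 := by
  have := congr_fun₂ (mem_unitaryGroup_iff.1 hW) i i
  simp only [mul_apply, star_apply, one_apply_eq, RCLike.star_def, Complex.mul_conj] at this
  exact_mod_cast this

theorem Matrix.sum_normSq_apply_left_eq_one (hW : W ∈ unitaryGroup ι ℂ) (j : ι) :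
    ∑ i, Complex.normSq (W i j) = 1 := by
  simpa using sum_normSq_apply_right_eq_one (Unitary.star_mem hW) j

end UnitaryComplex

theorem ConvexOn.sum_diag_succ_conjTranspose_mul_diagonal_mul_le {f : ℂ → ℝ}
    (hf : ConvexOn ℝ Set.univ f) {n : ℕ} {W : Matrix (Fin (n + 1)) (Fin (n + 1)) ℂ}
    (hW : W ∈ unitaryGroup (Fin (n + 1)) ℂ) (z : Fin (n + 1) → ℂ) :
    ∑ j : Fin n, f ((Wᴴ * diagonal z * W) j.succ j.succ) ≤
      ∑ p, (1 - Complex.normSq (W p 0)) * f (z p) := by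
  have hjensen (j) : f ((Wᴴ * diagonal z * W) j j) ≤ ∑ p, Complex.normSq (W p j) * f (z p) := by
    have hdiag : (Wᴴ * diagonal z * W) j j = ∑ p, Complex.normSq (W p j) • z p := by
      simp [conjTranspose_mul_diagonal_mul_apply_self, Complex.normSq_eq_conj_mul_self,
        Complex.real_smul]
    simpa [hdiag] using hf.map_sum_le (fun p _ => Complex.normSq_nonneg _)
      (sum_normSq_apply_left_eq_one hW j) fun p _ => Set.mem_univ _
  calc ∑ j : Fin n, f ((Wᴴ * diagonal z * W) j.succ j.succ)
      ≤ ∑ j : Fin n, ∑ p, Complex.normSq (W p j.succ) * f (z p) :=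
        sum_le_sum fun j _ => hjensen _
    _ = ∑ p, (∑ j : Fin n, Complex.normSq (W p j.succ)) * f (z p) := by
      rw [sum_comm]; simp only [sum_mul]
    _ = ∑ p, (1 - Complex.normSq (W p 0)) * f (z p) := by
      refine sum_congr rfl fun p _ => ?_
      rw [← sum_normSq_apply_right_eq_one hW p, Fin.sum_univ_succ, add_sub_cancel_left]

theorem sum_convexOn_roots_le {n : ℕ} (z : Fin (n + 1) → ℂ) (τ : Fin (n + 1) → ℝ)
    (hτ : ∀ i, 0 ≤ τ i) (hτsum : ∑ i, τ i = 1) (w : Fin n → ℂ)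
    (hw : (∑ i, C (τ i : ℂ) * ∏ l ∈ univ.erase i, (X - C (z l))).roots = univ.val.map w)
    {f : ℂ → ℝ} (hf : ConvexOn ℝ Set.univ f) :
    ∑ j, f (w j) ≤ ∑ i, (1 - τ i) * f (z i) := by
  set u : EuclideanSpace ℂ (Fin (n + 1)) := WithLp.toLp 2 fun i => (√(τ i) : ℂ)
  have hu : ‖u‖ = 1 := by
    simp [u, EuclideanSpace.norm_eq, Real.sq_sqrt (hτ _), hτsum]
  obtain ⟨W, hW, hWu, htri⟩ :=
    exists_mem_unitaryGroup_apply_zero_isUpperTriangular u hu (diagonal z)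
  have hτW (i) : Complex.normSq (W i 0) = τ i := by
    simp [hWu, u, Real.mul_self_sqrt (hτ i)]
  have hroots :
      univ.val.map w = univ.val.map ((Wᴴ * diagonal z * W).submatrix Fin.succ Fin.succ).diag := by
    rw [← hw, ← htri.roots_charpoly, charpoly_submatrix_succ_conjTranspose_mul_diagonal_mul hW]
    simp_rw [Complex.star_def, ← Complex.normSq_eq_conj_mul_self, hτW]
  calc ∑ j, f (w j) = ∑ j : Fin n, f ((Wᴴ * diagonal z * W) j.succ j.succ) := by
        have := congr_arg (fun s => (s.map f).sum) hroots
        simp only [Multiset.map_map] at this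
        exact this
    _ ≤ _ := hf.sum_diag_succ_conjTranspose_mul_diagonal_mul_le hW z
    _ = ∑ i, (1 - τ i) * f (z i) := by simp_rw [hτW]

theorem szego_nagy_majorization_general (m : ℕ)
    (z : Fin m → ℂ)
    (τ : Fin m → ℝ) (hτpos : ∀ i, 0 < τ i) (hτsum : ∑ i, τ i = 1)
    (w : Fin (m - 1) → ℂ)
    (hw : (∑ i, Polynomial.C (τ i : ℂ) *
        ∏ l ∈ Finset.univ.erase i, (Polynomial.X - Polynomial.C (z l))).roots =
      Multiset.map w Finset.univ.val)
    (f : ℂ → ℝ) (hf : ConvexOn ℝ Set.univ f) :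
    ∑ j, f (w j) ≤ ∑ i, (1 - τ i) * f (z i) := by
  cases m with
  | zero => simp at hτsum
  | succ n => exact sum_convexOn_roots_le z τ (fun i => (hτpos i).le) hτsum w hw hf

theorem szego_nagy_majorization (m : ℕ) (hm : 2 ≤ m)
    (z : Fin m → ℂ) (hz : ¬ ∀ i j, z i = z j)
    (τ : Fin m → ℝ) (hτpos : ∀ i, 0 < τ i) (hτsum : ∑ i, τ i = 1)
    (w : Fin (m - 1) → ℂ)
    (hw : (∑ i, Polynomial.C (τ i : ℂ) *
        ∏ l ∈ Finset.univ.erase i, (Polynomial.X - Polynomial.C (z l))).roots =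
      Multiset.map w Finset.univ.val)
    (f : ℂ → ℝ) (hf : ConvexOn ℝ Set.univ f) :
    ∑ j, f (w j) ≤ ∑ i, (1 - τ i) * f (z i) :=
  szego_nagy_majorization_general m z τ hτpos hτsum w hw f hf
end

section
/- Let α, β > -1, n ≥ 1, and let ζ_{n,1},…,ζ_{n,n} be the zeros of the Jacobi polynomial P_n^{(α,β)}. Then for any convex function f : [-1,1] → ℝ, (1/n) Σ_{i=1}^{n} f(ζ_{n,i}) ≤ ((n+β) f(1) + (n+α) f(-1)) / (2n + α + β). -/
/-- The Jacobi polynomial `P_n^{(α,β)}`, as a real function, defined via the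
Rodrigues formula. -/
noncomputable def jacobiFun (n : ℕ) (α β : ℝ) (x : ℝ) : ℝ :=
  ((-1 : ℝ) ^ n / (2 ^ n * n.factorial)) * (1 - x) ^ (-α) * (1 + x) ^ (-β) *
    iteratedDeriv n (fun z : ℝ => (1 - z) ^ ((n : ℝ) + α) * (1 + z) ^ ((n : ℝ) + β)) x

/-!
Each zero `ζ` lies in `[-1, 1]`, so convexity bounds `f ζ` by the chord value
`((1 - ζ) f(-1) + (1 + ζ) f(1)) / 2`, which is affine in `ζ`; after summing, only `∑ ζᵢ` is left.
By Vieta, `∑ ζᵢ = -nextCoeff / leadingCoeff`. Leibniz' rule turns the Rodrigues formula into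
`2ⁿ n! P_n = ∑ (n choose i) (n+α)_i (n+β)_(n-i) (x - 1)^(n-i) (x + 1)^i` with falling factorials
`(·)_k`, and the Chu–Vandermonde identity evaluates its two top coefficients, giving
`∑ ζᵢ = n (β - α) / (2n + α + β)`.
-/

open Polynomial Finset

section
variable {R : Type*} [CommRing R]

theorem descPochhammer_eval_add_eq_sum (a b : R) (n : ℕ) :
    (descPochhammer R n).eval (a + b) =
      ∑ i ∈ range (n + 1), n.choose i * (descPochhammer R i).eval a *
        (descPochhammer R (n - i)).eval b := by
  have hsm (k : ℕ) (x : R) : (descPochhammer ℤ k).smeval x = (descPochhammer R k).eval x := by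
    rw [← aeval_eq_smeval, ← eval_map_algebraMap, descPochhammer_map]
  have h := Ring.descPochhammer_smeval_add (r := a) (s := b) n (Commute.all a b)
  rw [Finset.Nat.sum_antidiagonal_eq_sum_range_succ_mk] at h
  simpa only [hsm, mul_assoc] using h

theorem sum_range_mul_choose_mul_descPochhammer_eval (a b : R) (n : ℕ) :
    ∑ i ∈ range (n + 1), (i : R) * n.choose i * (descPochhammer R i).eval a *
        (descPochhammer R (n - i)).eval b =
      n * a * (descPochhammer R (n - 1)).eval (a - 1 + b) := by
  cases n with
  | zero => simp
  | succ m =>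
    have hterm (i : ℕ) : ((i + 1 : ℕ) : R) * (m + 1).choose (i + 1) *
          (descPochhammer R (i + 1)).eval a * (descPochhammer R (m + 1 - (i + 1))).eval b =
        (m + 1) * a * (m.choose i * (descPochhammer R i).eval (a - 1) *
          (descPochhammer R (m - i)).eval b) := by
      have hc : ((m + 1).choose (i + 1) * (i + 1) : R) = (m + 1) * m.choose i := by
        exact_mod_cast congrArg (Nat.cast (R := R)) (Nat.add_one_mul_choose_eq m i).symm
      rw [descPochhammer_succ_left, eval_mul, eval_comp, Nat.add_sub_add_right]
      simp only [eval_X, eval_sub, eval_one]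
      push_cast
      linear_combination a * (descPochhammer R i).eval (a - 1) *
        (descPochhammer R (m - i)).eval b * hc
    rw [sum_range_succ', sum_congr rfl fun i _ => hterm i, ← mul_sum,
      ← descPochhammer_eval_add_eq_sum]
    simp

theorem sum_range_sub_mul_choose_mul_descPochhammer_eval (a b : R) (n : ℕ) :
    ∑ i ∈ range (n + 1), ((n - i : ℕ) : R) * n.choose i * (descPochhammer R i).eval a *
        (descPochhammer R (n - i)).eval b =
      n * b * (descPochhammer R (n - 1)).eval (a + b - 1) := by
  rw [show a + b - 1 = b - 1 + a by ring, ← sum_range_mul_choose_mul_descPochhammer_eval b a n,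
    ← sum_range_reflect]
  refine sum_congr rfl fun i hi => ?_
  have hi : i ≤ n := Nat.lt_succ_iff.mp (mem_range.mp hi)
  rw [Nat.add_sub_cancel, Nat.sub_sub_self hi, Nat.choose_symm hi]
  ring

theorem Polynomial.nextCoeff_eq_neg_leadingCoeff_mul_sum_of_injective [IsDomain R] {p : R[X]}
    {n : ℕ} {ζ : Fin n → R} (hζ : Function.Injective ζ)
    (hroot : ∀ i, p.IsRoot (ζ i)) (hp : p ≠ 0) (hdeg : p.natDegree ≤ n) :
    p.nextCoeff = -p.leadingCoeff * ∑ i, ζ i := by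
  classical
  have hcard : (univ.image ζ).card = n := by
    rw [card_image_of_injective _ hζ, card_univ, Fintype.card_fin]
  have hroots : p.roots = (univ.image ζ).val :=
    roots_eq_of_natDegree_le_card_of_ne_zero (by simpa using hroot) (hcard.symm ▸ hdeg) hp
  have hsplit : p.Splits := by
    rw [splits_iff_card_roots, hroots]
    exact le_antisymm (hroots ▸ card_roots' p) (hdeg.trans hcard.ge)
  rw [hsplit.nextCoeff_eq_neg_sum_roots_mul_leadingCoeff, hroots, sum_val,
    sum_image fun i _ j _ h => hζ h]
  rfl

theorem isMonicOfDegree_X_sub_one_pow_mul_X_add_one_pow [Nontrivial R] {n i : ℕ} (hi : i ≤ n) :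
    IsMonicOfDegree ((X - C 1 : R[X]) ^ (n - i) * (X + C 1) ^ i) n := by
  have h := ((isMonicOfDegree_X_sub_one (1 : R)).pow (n - i)).mul
    ((isMonicOfDegree_X_add_one (1 : R)).pow i)
  rwa [one_mul, one_mul, Nat.sub_add_cancel hi] at h

theorem nextCoeff_X_sub_one_pow_mul_X_add_one_pow (n i : ℕ) :
    ((X - C 1 : R[X]) ^ (n - i) * (X + C 1) ^ i).nextCoeff = (i : R) - (n - i : ℕ) := by
  rw [((monic_X_sub_C 1).pow _).nextCoeff_mul ((monic_X_add_C 1).pow _),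
    (monic_X_sub_C 1).nextCoeff_pow, (monic_X_add_C 1).nextCoeff_pow, nextCoeff_X_sub_C,
    nextCoeff_X_add_C, nsmul_eq_mul, nsmul_eq_mul]
  ring

/-- `(x - 1)ⁿ (x + 1)ⁿ (1 - x)⁻ᵃ (1 + x)⁻ᵇ dⁿ/dxⁿ [(1 - x)ᵃ (1 + x)ᵇ]` on `(-1, 1)`, expanded by
Leibniz' rule; `rodriguesPoly n (n + α) (n + β)` is `2ⁿ n!` times the Jacobi polynomial. -/
noncomputable def rodriguesPoly (n : ℕ) (a b : R) : R[X] :=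
  ∑ i ∈ range (n + 1), C (n.choose i * (descPochhammer R i).eval a *
    (descPochhammer R (n - i)).eval b) * ((X - C 1) ^ (n - i) * (X + C 1) ^ i)

theorem natDegree_rodriguesPoly_le (n : ℕ) (a b : R) : (rodriguesPoly n a b).natDegree ≤ n := by
  nontriviality R
  exact natDegree_sum_le_of_forall_le _ _ fun i hi => (natDegree_C_mul_le _ _).trans
    (isMonicOfDegree_X_sub_one_pow_mul_X_add_one_pow
      (Nat.lt_succ_iff.mp (mem_range.mp hi))).natDegree_eq.le

theorem coeff_rodriguesPoly_self (n : ℕ) (a b : R) :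
    (rodriguesPoly n a b).coeff n = (descPochhammer R n).eval (a + b) := by
  nontriviality R
  rw [rodriguesPoly, finsetSum_coeff, descPochhammer_eval_add_eq_sum]
  refine sum_congr rfl fun i hi => ?_
  have hM := isMonicOfDegree_X_sub_one_pow_mul_X_add_one_pow (R := R)
    (Nat.lt_succ_iff.mp (mem_range.mp hi))
  have hlead := hM.monic.coeff_natDegree
  rw [hM.natDegree_eq] at hlead
  rw [coeff_C_mul, hlead, mul_one]

theorem coeff_rodriguesPoly_pred {n : ℕ} (hn : n ≠ 0) (a b : R) :
    (rodriguesPoly n a b).coeff (n - 1) =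
      n * (a - b) * (descPochhammer R (n - 1)).eval (a + b - 1) := by
  nontriviality R
  have hterm : ∀ i ∈ range (n + 1), (C (n.choose i * (descPochhammer R i).eval a *
      (descPochhammer R (n - i)).eval b) * ((X - C 1) ^ (n - i) * (X + C 1) ^ i)).coeff (n - 1) =
      (i : R) * n.choose i * (descPochhammer R i).eval a * (descPochhammer R (n - i)).eval b -
      ((n - i : ℕ) : R) * n.choose i * (descPochhammer R i).eval a *
        (descPochhammer R (n - i)).eval b := by
    intro i hi
    have hM := isMonicOfDegree_X_sub_one_pow_mul_X_add_one_pow (R := R)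
      (Nat.lt_succ_iff.mp (mem_range.mp hi))
    have hnext := nextCoeff_of_natDegree_pos (hM.natDegree_eq ▸ Nat.pos_of_ne_zero hn)
    rw [hM.natDegree_eq, nextCoeff_X_sub_one_pow_mul_X_add_one_pow] at hnext
    rw [coeff_C_mul, ← hnext]
    ring
  rw [rodriguesPoly, finsetSum_coeff, sum_congr rfl hterm, sum_sub_distrib,
    sum_range_mul_choose_mul_descPochhammer_eval, sum_range_sub_mul_choose_mul_descPochhammer_eval,
    sub_add_eq_add_sub]
  ring

theorem sum_mul_eq_of_isRoot_rodriguesPoly [IsDomain R] {n : ℕ}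
    (hn : n ≠ 0) {a b : R} (hab : (descPochhammer R n).eval (a + b) ≠ 0) {ζ : Fin n → R}
    (hζ : Function.Injective ζ) (hroot : ∀ i, (rodriguesPoly n a b).IsRoot (ζ i)) :
    (a + b) * ∑ i, ζ i = n * (b - a) := by
  have hcoeff := coeff_rodriguesPoly_self n a b
  have hdeg : (rodriguesPoly n a b).natDegree = n :=
    natDegree_eq_of_le_of_coeff_ne_zero (natDegree_rodriguesPoly_le n a b) (hcoeff ▸ hab)
  have hp : rodriguesPoly n a b ≠ 0 := fun h => hab (by rw [← hcoeff, h, coeff_zero])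
  have hvieta := nextCoeff_eq_neg_leadingCoeff_mul_sum_of_injective hζ hroot hp hdeg.le
  rw [nextCoeff_of_natDegree_pos (by rw [hdeg]; exact Nat.pos_of_ne_zero hn), leadingCoeff, hdeg,
    hcoeff, coeff_rodriguesPoly_pred hn] at hvieta
  obtain ⟨m, rfl⟩ := Nat.exists_eq_succ_of_ne_zero hn
  have hsucc : (descPochhammer R (m + 1)).eval (a + b) =
      (a + b) * (descPochhammer R m).eval (a + b - 1) := by
    rw [descPochhammer_succ_left, eval_mul, eval_comp]
    simp
  rw [hsucc] at hab hvieta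
  refine mul_right_cancel₀ (right_ne_zero_of_mul hab) ?_
  simp only [Nat.succ_sub_one] at hvieta
  linear_combination hvieta

end

theorem ConvexOn.le_chord {f : ℝ → ℝ} {a b x : ℝ} (hf : ConvexOn ℝ (Set.Icc a b) f)
    (hx : x ∈ Set.Icc a b) (hab : a < b) :
    f x ≤ ((b - x) * f a + (x - a) * f b) / (b - a) := by
  have hba : 0 < b - a := sub_pos.mpr hab
  have h := hf.2 (Set.left_mem_Icc.mpr hab.le) (Set.right_mem_Icc.mpr hab.le)
    (div_nonneg (sub_nonneg.mpr hx.2) hba.le) (div_nonneg (sub_nonneg.mpr hx.1) hba.le)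
    (by field_simp; ring)
  have hpoint : ((b - x) / (b - a)) • a + ((x - a) / (b - a)) • b = x := by
    simp only [smul_eq_mul]
    field_simp
    ring
  rwa [hpoint, smul_eq_mul, smul_eq_mul, div_mul_eq_mul_div, div_mul_eq_mul_div,
    ← add_div] at h

theorem Real.iteratedDeriv_one_sub_rpow (a x : ℝ) (k : ℕ) :
    iteratedDeriv k (fun z : ℝ => (1 - z) ^ a) x =
      (-1) ^ k * (descPochhammer ℝ k).eval a * (1 - x) ^ (a - k) := by
  simp only [iteratedDeriv_comp_const_sub k (fun y : ℝ => y ^ a), iteratedDeriv_eq_iterate,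
    iter_deriv_rpow_const, smul_eq_mul, mul_assoc]

theorem Real.iteratedDeriv_one_add_rpow (b x : ℝ) (k : ℕ) :
    iteratedDeriv k (fun z : ℝ => (1 + z) ^ b) x =
      (descPochhammer ℝ k).eval b * (1 + x) ^ (b - k) := by
  simp only [iteratedDeriv_comp_const_add k (fun y : ℝ => y ^ b), iteratedDeriv_eq_iterate,
    iter_deriv_rpow_const]

theorem Real.iteratedDeriv_one_sub_rpow_mul_one_add_rpow (n : ℕ) (a b : ℝ) {x : ℝ}
    (hx : x ∈ Set.Ioo (-1) 1) :
    iteratedDeriv n (fun z => (1 - z) ^ a * (1 + z) ^ b) x =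
      (-1) ^ n * (1 - x) ^ (a - n) * (1 + x) ^ (b - n) * (rodriguesPoly n a b).eval x := by
  have h1 : 1 - x ≠ 0 := by linarith [hx.2]
  have h2 : 1 + x ≠ 0 := by linarith [hx.1]
  rw [iteratedDeriv_fun_mul (by fun_prop (disch := exact h1)) (by fun_prop (disch := exact h2)),
    rodriguesPoly, eval_finsetSum, mul_sum]
  refine sum_congr rfl fun i hi => ?_
  have hi : i ≤ n := Nat.lt_succ_iff.mp (mem_range.mp hi)
  have hsub : (1 - x) ^ (a - i) = (1 - x) ^ (a - n) * (x - 1) ^ (n - i) * (-1) ^ (n - i) := by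
    rw [mul_assoc, ← mul_pow, show (x - 1) * -1 = 1 - x by ring, ← Real.rpow_add_natCast h1,
      Nat.cast_sub hi]
    congr 1
    ring
  have hadd : (1 + x) ^ (b - (n - i : ℕ)) = (1 + x) ^ (b - n) * (x + 1) ^ i := by
    rw [add_comm x, ← Real.rpow_add_natCast h2, Nat.cast_sub hi]
    congr 1
    ring
  have hsign : ((-1 : ℝ) ^ i * (-1) ^ (n - i)) = (-1) ^ n := by
    rw [← pow_add, Nat.add_sub_cancel' hi]
  rw [Real.iteratedDeriv_one_sub_rpow, Real.iteratedDeriv_one_add_rpow, hsub, hadd, ← hsign]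
  simp only [eval_mul, eval_C, eval_pow, eval_sub, eval_add, eval_X]
  ring

theorem jacobiFun_eq_eval_rodriguesPoly (n : ℕ) (α β : ℝ) {x : ℝ} (hx : x ∈ Set.Ioo (-1) 1) :
    jacobiFun n α β x = (rodriguesPoly n (n + α) (n + β)).eval x / (2 ^ n * n.factorial) := by
  have h1 : (1 - x) ^ (-α) * (1 - x) ^ ((n : ℝ) + α - n) = 1 := by
    rw [← Real.rpow_add (by linarith [hx.2])]
    simp
  have h2 : (1 + x) ^ (-β) * (1 + x) ^ ((n : ℝ) + β - n) = 1 := by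
    rw [← Real.rpow_add (by linarith [hx.1])]
    simp
  have hsign : ((-1 : ℝ) ^ n * (-1) ^ n) = 1 := by
    rw [← pow_add, ← two_mul, pow_mul]
    simp
  rw [jacobiFun, Real.iteratedDeriv_one_sub_rpow_mul_one_add_rpow n _ _ hx]
  calc _ = ((-1 : ℝ) ^ n * (-1) ^ n) * ((1 - x) ^ (-α) * (1 - x) ^ ((n : ℝ) + α - n)) *
        ((1 + x) ^ (-β) * (1 + x) ^ ((n : ℝ) + β - n)) *
        (rodriguesPoly n (n + α) (n + β)).eval x / (2 ^ n * n.factorial) := by ring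
    _ = _ := by rw [hsign, h1, h2, one_mul, one_mul, one_mul]

theorem sum_jacobi_zeros {α β : ℝ} (hα : -1 < α) (hβ : -1 < β) {n : ℕ} (hn : 1 ≤ n)
    {ζ : Fin n → ℝ} (hζmem : ∀ i, ζ i ∈ Set.Ioo (-1 : ℝ) 1)
    (hζroot : ∀ i, jacobiFun n α β (ζ i) = 0) (hζinj : Function.Injective ζ) :
    (2 * n + α + β) * ∑ i, ζ i = n * (β - α) := by
  have hroot (i : Fin n) : (rodriguesPoly n (n + α) (n + β)).IsRoot (ζ i) := by
    have h := hζroot i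
    rw [jacobiFun_eq_eval_rodriguesPoly n α β (hζmem i), div_eq_zero_iff] at h
    exact h.resolve_right (by positivity)
  have hn' : (1 : ℝ) ≤ n := by exact_mod_cast hn
  have hpos : 0 < (descPochhammer ℝ n).eval ((n + α) + (n + β)) :=
    descPochhammer_pos (by linarith)
  have h := sum_mul_eq_of_isRoot_rodriguesPoly (by omega) hpos.ne' hζinj hroot
  linear_combination h

theorem jacobi_zeros_choquet (α β : ℝ) (hα : -1 < α) (hβ : -1 < β)
    (n : ℕ) (hn : 1 ≤ n) (ζ : Fin n → ℝ)
    (hζmem : ∀ i, ζ i ∈ Set.Ioo (-1 : ℝ) 1)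
    (hζroot : ∀ i, jacobiFun n α β (ζ i) = 0)
    (hζinj : Function.Injective ζ)
    (f : ℝ → ℝ) (hf : ConvexOn ℝ (Set.Icc (-1 : ℝ) 1) f) :
    (1 / n) * ∑ i, f (ζ i) ≤ ((n + β) * f 1 + (n + α) * f (-1)) / (2 * n + α + β) := by
  have hn' : (1 : ℝ) ≤ n := by exact_mod_cast hn
  have hA : 0 < 2 * (n : ℝ) + α + β := by linarith
  have hsum := sum_jacobi_zeros hα hβ hn hζmem hζroot hζinj
  have hchord (i : Fin n) : f (ζ i) ≤ ((1 - ζ i) * f (-1) + (1 + ζ i) * f 1) / 2 := by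
    convert hf.le_chord (Set.Ioo_subset_Icc_self (hζmem i)) (by norm_num) using 1
    ring
  calc (1 / n) * ∑ i, f (ζ i) ≤ (1 / n) * ∑ i, ((1 - ζ i) * f (-1) + (1 + ζ i) * f 1) / 2 := by
        gcongr with i
        exact hchord i
    _ = ((n - ∑ i, ζ i) * f (-1) + (n + ∑ i, ζ i) * f 1) / (2 * n) := by
        simp only [← sum_div, sum_add_distrib, ← sum_mul, sum_sub_distrib, sum_const, card_univ,
          Fintype.card_fin, nsmul_eq_mul, mul_one]
        ring
    _ = _ := by
        rw [div_eq_div_iff (by positivity) hA.ne']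
        linear_combination (f 1 - f (-1)) * hsum
end

section
/- Let n ≥ 1 and let ζ_{n,1},…,ζ_{n,n} be the zeros of the n-th Chebyshev polynomial of the first kind T_n, i.e. ζ_{n,i} = cos((2i-1)π/(2n)). Then for any convex function f : [-1,1] → ℝ, (1/n) Σ_{i=1}^{n} f(cos((2i-1)π/(2n))) ≤ (f(1) + f(-1))/2. -/
open Real Finset

lemma sum_cos_cheb (n : ℕ) (hn : 1 ≤ n) :
    ∑ i : Fin n, Real.cos ((2 * (i : ℝ) + 1) * Real.pi / (2 * n)) = 0 := by
  have hn0 : (n : ℝ) ≠ 0 := by positivity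
  set S := ∑ i : Fin n, Real.cos ((2 * (i : ℝ) + 1) * Real.pi / (2 * n)) with hS
  have key : S = -S := by
    have h := Fintype.sum_bijective (Fin.rev) (Fin.rev_bijective)
      (fun i : Fin n => Real.cos ((2 * (i : ℝ) + 1) * Real.pi / (2 * n)))
      (fun i : Fin n => -Real.cos ((2 * (i : ℝ) + 1) * Real.pi / (2 * n))) ?_
    · simp only [Finset.sum_neg_distrib] at h
      exact h
    · intro i
      have hi : (i : ℕ) + 1 ≤ n := i.2
      have hval : ((Fin.rev i : ℕ) : ℝ) = (n : ℝ) - 1 - (i : ℝ) := by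
        rw [Fin.val_rev, Nat.cast_sub hi]
        push_cast
        ring
      have harg : (2 * ((Fin.rev i : ℕ) : ℝ) + 1) * Real.pi / (2 * n)
          = Real.pi - (2 * (i : ℝ) + 1) * Real.pi / (2 * n) := by
        rw [hval]; field_simp; ring
      simp only [harg, Real.cos_pi_sub, neg_neg]
  linarith

theorem chebyshev_zeros_choquet (n : ℕ) (hn : 1 ≤ n)
    (f : ℝ → ℝ) (hf : ConvexOn ℝ (Set.Icc (-1 : ℝ) 1) f) :
    (1 / n) * ∑ i : Fin n, f (Real.cos ((2 * (i : ℝ) + 1) * Real.pi / (2 * n))) ≤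
      (f 1 + f (-1)) / 2 := by
  have hn0 : (0 : ℝ) < n := by exact_mod_cast hn
  set c : Fin n → ℝ := fun i => Real.cos ((2 * (i : ℝ) + 1) * Real.pi / (2 * n)) with hc
  have hbound : ∀ i : Fin n, f (c i) ≤ (1 + c i) / 2 * f 1 + (1 - c i) / 2 * f (-1) := by
    intro i
    have h1 : -1 ≤ c i := Real.neg_one_le_cos _
    have h2 : c i ≤ 1 := Real.cos_le_one _
    have ht0 : 0 ≤ (1 + c i) / 2 := by linarith
    have ht1 : 0 ≤ (1 - c i) / 2 := by linarith
    have hsum : (1 + c i) / 2 + (1 - c i) / 2 = 1 := by ring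
    have := hf.2 (Set.mem_Icc.mpr ⟨by norm_num, le_refl 1⟩)
      (Set.mem_Icc.mpr ⟨le_refl (-1), by norm_num⟩) ht0 ht1 hsum
    simp only [smul_eq_mul] at this
    have e : (1 + c i) / 2 * 1 + (1 - c i) / 2 * (-1) = c i := by ring
    rw [e] at this
    exact this
  have hcos : ∑ i : Fin n, c i = 0 := sum_cos_cheb n hn
  have hsumle : ∑ i : Fin n, f (c i) ≤ (n : ℝ) * ((f 1 + f (-1)) / 2) := by
    calc ∑ i : Fin n, f (c i)
        ≤ ∑ i : Fin n, ((1 + c i) / 2 * f 1 + (1 - c i) / 2 * f (-1)) :=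
          Finset.sum_le_sum fun i _ => hbound i
      _ = (n : ℝ) * ((f 1 + f (-1)) / 2) := by
          rw [Finset.sum_add_distrib, ← Finset.sum_mul, ← Finset.sum_mul]
          have h1 : ∑ i : Fin n, (1 + c i) / 2 = n / 2 := by
            rw [← Finset.sum_div, Finset.sum_add_distrib, hcos]
            simp
          have h2 : ∑ i : Fin n, (1 - c i) / 2 = n / 2 := by
            rw [← Finset.sum_div, Finset.sum_sub_distrib, hcos]
            simp
          rw [h1, h2]; ring
  rw [div_mul_eq_mul_div, one_mul, div_le_iff₀ hn0]
  linarith [hsumle]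
end

section
/- Let p ≥ 2, Q_2(z) = Π_{l=1}^p (z - ζ_l), Q_1(z)/Q_2(z) = Σ_l a_l/(z - ζ_l) with a_l > 0, and suppose S of degree n and V of degree p-2 satisfy Q_2 S'' + Q_1 S' + V S = 0. Then every zero of V and every zero of S lies in the convex hull of {ζ_1,…,ζ_p}. -/
/-!
Let `K` be the convex hull of the `ζ l`. If a zero of `S` lies outside `K`, separate it from `K`
by a real linear functional `f` and let `e` be a zero of `S` maximising `f`. Since `Q₂(e) ≠ 0`,
`e` is a simple zero, and evaluating the equation at `e` gives
`2 ∑_{w} 1 / (e - w) + ∑_l a_l / (e - ζ_l) = 0`, the first sum over the other zeros `w` of `S`.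
Applying `f ∘ conj` sends `1 / (e - w)` to `f (e - w) / |e - w| ^ 2`, so the left side becomes
strictly positive: a contradiction (Stieltjes' electrostatic argument).
For a zero `v` of `V` outside `K` the same argument applies to
`S''(v) / S'(v) + Q₁(v) / Q₂(v) = 0`, the zeros of `S'` lying in `K` by Gauss–Lucas.
-/

open Polynomial

open scoped ComplexConjugate

theorem map_conj_div {F : Type*} [FunLike F ℂ ℝ] [LinearMapClass F ℝ ℂ ℝ] (f : F) (c : ℝ)
    (z : ℂ) : f (conj (c / z)) = c * f z / Complex.normSq z := by
  have : conj (c / z) = (c / Complex.normSq z) • z := by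
    rw [Complex.real_smul, map_div₀, Complex.conj_ofReal, Complex.ofReal_div,
      Complex.normSq_eq_conj_mul_self]
    rcases eq_or_ne z 0 with rfl | hz
    · simp
    field_simp
  rw [this, map_smul, smul_eq_mul, div_mul_eq_mul_div]

theorem nat_mul_sum_one_div_sub_add_sum_div_sub_ne_zero {F : Type*} [FunLike F ℂ ℝ]
    [LinearMapClass F ℝ ℂ ℝ] {ι : Type*} [Fintype ι] [Nonempty ι] (f : F) (k : ℕ)
    {e : ℂ} {s : Multiset ℂ} (hs : ∀ w ∈ s, f w ≤ f e) {ζ : ι → ℂ} (hζ : ∀ l, f (ζ l) < f e)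
    {a : ι → ℝ} (ha : ∀ l, 0 < a l) :
    k * (s.map fun w ↦ 1 / (e - w)).sum + ∑ l, (a l : ℂ) / (e - ζ l) ≠ 0 := by
  intro h
  have hroots : 0 ≤ f (conj (k * (s.map fun w ↦ 1 / (e - w)).sum)) := by
    rw [map_mul, map_natCast, ← nsmul_eq_mul, map_nsmul, map_multiset_sum, map_multiset_sum,
      Multiset.map_map, Multiset.map_map]
    refine nsmul_nonneg (Multiset.sum_nonneg fun x hx ↦ ?_) k
    obtain ⟨w, hw, rfl⟩ := Multiset.mem_map.1 hx
    rw [Function.comp_apply, Function.comp_apply, ← Complex.ofReal_one, map_conj_div, map_sub]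
    exact div_nonneg (mul_nonneg zero_le_one (sub_nonneg.2 (hs w hw))) (Complex.normSq_nonneg _)
  have hnodes : 0 < f (conj (∑ l, (a l : ℂ) / (e - ζ l))) := by
    simp only [map_sum, map_conj_div, map_sub]
    refine Finset.sum_pos (fun l _ ↦ div_pos (mul_pos (ha l) (sub_pos.2 (hζ l))) ?_)
      Finset.univ_nonempty
    refine Complex.normSq_pos.2 (sub_ne_zero.2 ?_)
    rintro rfl
    exact (hζ l).false
  have := congrArg (fun z ↦ f (conj z)) h
  simp only [map_add, map_zero] at this
  linarith

theorem exists_forall_lt_of_notMem_convexHull {E : Type*} [NormedAddCommGroup E]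
    [NormedSpace ℝ E] {s : Set E} (hs : s.Finite) {x : E} (hx : x ∉ convexHull ℝ s) :
    ∃ f : StrongDual ℝ E, ∀ y ∈ convexHull ℝ s, f y < f x :=
  let ⟨f, _, hlt, hgt⟩ :=
    geometric_hahn_banach_closed_point (convex_convexHull ℝ s)
      (hs.isClosed_convexHull (𝕜 := ℝ)) hx
  ⟨f, fun y hy ↦ (hlt y hy).trans hgt⟩

section NodePolynomial

variable {K ι : Type*} [Field K] [Fintype ι] {ζ : ι → K} {z : K}

theorem eval_prod_X_sub_C_ne_zero (hz : z ∉ Set.range ζ) : eval z (∏ l, (X - C (ζ l))) ≠ 0 := by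
  rw [eval_prod, Finset.prod_ne_zero_iff]
  intro l _
  rw [eval_sub, eval_X, eval_C, sub_ne_zero]
  exact fun h ↦ hz ⟨l, h.symm⟩

theorem eval_sum_C_mul_prod_erase [DecidableEq ι] (hz : z ∉ Set.range ζ) (c : ι → K) :
    eval z (∑ l, C (c l) * ∏ j ∈ Finset.univ.erase l, (X - C (ζ j))) =
      eval z (∏ l, (X - C (ζ l))) * ∑ l, c l / (z - ζ l) := by
  simp only [eval_finsetSum, eval_mul, eval_C, eval_prod, eval_sub, eval_X, Finset.mul_sum]
  refine Finset.sum_congr rfl fun l _ ↦ ?_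
  have hl : z - ζ l ≠ 0 := sub_ne_zero.2 fun h ↦ hz ⟨l, h.symm⟩
  rw [← Finset.mul_prod_erase _ _ (Finset.mem_univ l)]
  field_simp

end NodePolynomial

theorem eval_derivative_X_sub_C_mul {R : Type*} [CommRing R] (e : R) (T : R[X]) :
    eval e (derivative ((X - C e) * T)) = eval e T := by
  simp

theorem eval_derivative_derivative_X_sub_C_mul {R : Type*} [CommRing R] (e : R) (T : R[X]) :
    eval e (derivative (derivative ((X - C e) * T))) = 2 * eval e (derivative T) := by
  simp only [derivative_mul, derivative_sub, derivative_X, derivative_C, sub_zero, one_mul,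
    derivative_add, eval_add, eval_mul, eval_sub, eval_X, eval_C, sub_self, zero_mul, add_zero]
  ring

theorem rootMultiplicity_le_one_of_mul_derivative_derivative_add {K : Type*} [Field K]
    [CharZero K] {A B V S : K[X]}
    (heq : A * derivative (derivative S) + B * derivative S + V * S = 0) (hS : S ≠ 0)
    {e : K} (hA : eval e A ≠ 0) : S.rootMultiplicity e ≤ 1 := by
  set m := S.rootMultiplicity e
  by_contra! hm
  have hS' : (derivative S).rootMultiplicity e = m - 1 :=
    derivative_rootMultiplicity_of_root ((rootMultiplicity_pos hS).1 (by omega))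
  have hS'0 : derivative S ≠ 0 := fun h ↦ by simp [h] at hS'; omega
  have hS'e : (derivative S).IsRoot e := (rootMultiplicity_pos hS'0).1 (by omega)
  have hS'' : (derivative (derivative S)).rootMultiplicity e = m - 2 := by
    rw [derivative_rootMultiplicity_of_root hS'e, hS']
    omega
  have hS''0 : derivative (derivative S) ≠ 0 := by
    intro h
    rw [eq_C_of_derivative_eq_zero h, IsRoot, eval_C] at hS'e
    exact hS'0 (by rw [eq_C_of_derivative_eq_zero h, hS'e, C_0])
  have hdvd : (X - C e) ^ (m - 1) ∣ A * derivative (derivative S) := by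
    rw [eq_neg_of_add_eq_zero_left ((add_assoc _ _ _).symm.trans heq)]
    refine (dvd_add ?_ ?_).neg_right
    · exact dvd_mul_of_dvd_right (hS' ▸ pow_rootMultiplicity_dvd _ _) _
    · exact dvd_mul_of_dvd_right
        ((pow_dvd_pow _ (Nat.sub_le m 1)).trans (pow_rootMultiplicity_dvd _ _)) _
  have hA0 : A ≠ 0 := fun h ↦ hA (by simp [h])
  have := (le_rootMultiplicity_iff (mul_ne_zero hA0 hS''0)).2 hdvd
  rw [rootMultiplicity_mul (mul_ne_zero hA0 hS''0), rootMultiplicity_eq_zero hA, hS''] at this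
  omega

section LameEquation

variable {ι : Type*} [Fintype ι] [Nonempty ι] {ζ : ι → ℂ} {a : ι → ℝ} {A B V S : ℂ[X]}

theorem heineStieltjes_roots_mem_convexHull (ha : ∀ l, 0 < a l)
    (hA : ∀ z ∉ Set.range ζ, eval z A ≠ 0)
    (hB : ∀ z ∉ Set.range ζ, eval z B = eval z A * ∑ l, (a l : ℂ) / (z - ζ l))
    (heq : A * derivative (derivative S) + B * derivative S + V * S = 0) (hS : S ≠ 0) :
    ∀ s ∈ S.roots, s ∈ convexHull ℝ (Set.range ζ) := by
  intro s hs
  by_contra hsK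
  obtain ⟨f, hf⟩ := exists_forall_lt_of_notMem_convexHull (Set.finite_range ζ) hsK
  obtain ⟨e, he, hmax⟩ :=
    S.roots.toFinset.exists_max_image f ⟨s, Multiset.mem_toFinset.2 hs⟩
  rw [Multiset.mem_toFinset] at he
  have hζe : ∀ l, f (ζ l) < f e := fun l ↦
    (hf _ (subset_convexHull ℝ _ ⟨l, rfl⟩)).trans_le (hmax s (Multiset.mem_toFinset.2 hs))
  have heζ : e ∉ Set.range ζ := by
    rintro ⟨l, rfl⟩
    exact (hζe l).false
  have hsimple : S.rootMultiplicity e = 1 :=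
    le_antisymm (rootMultiplicity_le_one_of_mul_derivative_derivative_add heq hS (hA e heζ))
      ((rootMultiplicity_pos hS).2 (isRoot_of_mem_roots he))
  obtain ⟨T, hST, hTe⟩ := S.exists_eq_pow_rootMultiplicity_mul_and_not_dvd hS e
  rw [hsimple, pow_one] at hST
  rw [dvd_iff_isRoot] at hTe
  have hTS : ∀ w ∈ T.roots, f w ≤ f e := fun w hw ↦
    hmax w (Multiset.mem_toFinset.2
      (Multiset.mem_of_le (roots.le_of_dvd hS (hST ▸ dvd_mul_left T _)) hw))
  have key : eval e A * eval e T *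
      (2 * (T.roots.map fun w ↦ 1 / (e - w)).sum + ∑ l, (a l : ℂ) / (e - ζ l)) = 0 := by
    have := congrArg (eval e) heq
    rw [hST, eval_add, eval_add, eval_mul, eval_mul, eval_mul, eval_derivative_X_sub_C_mul,
      eval_derivative_derivative_X_sub_C_mul, hB e heζ,
      (IsAlgClosed.splits T).eval_derivative_eq_eval_mul_sum hTe] at this
    simp only [eval_mul, eval_sub, eval_X, eval_C, sub_self, zero_mul, mul_zero, add_zero,
      eval_zero] at this
    linear_combination this
  exact nat_mul_sum_one_div_sub_add_sum_div_sub_ne_zero f 2 hTS hζe ha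
    ((mul_eq_zero.1 key).resolve_left (mul_ne_zero (hA e heζ) hTe))

theorem vanVleck_roots_mem_convexHull (ha : ∀ l, 0 < a l)
    (hA : ∀ z ∉ Set.range ζ, eval z A ≠ 0)
    (hB : ∀ z ∉ Set.range ζ, eval z B = eval z A * ∑ l, (a l : ℂ) / (z - ζ l))
    (heq : A * derivative (derivative S) + B * derivative S + V * S = 0) (hS : S ≠ 0) :
    ∀ v ∈ V.roots, v ∈ convexHull ℝ (Set.range ζ) := by
  intro v hv
  by_contra hvK
  have hS' : derivative S ≠ 0 := by
    intro h
    simp [h, hS, ne_zero_of_mem_roots hv] at heq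
  have hS'K : ∀ w, eval w (derivative S) = 0 → w ∈ convexHull ℝ (Set.range ζ) := by
    intro w hw
    have hdeg : 0 < S.degree := natDegree_pos_iff_degree_pos.1
      (Nat.pos_of_ne_zero (derivative_ne_zero.1 hS'))
    refine convexHull_min (fun x hx ↦ ?_) (convex_convexHull ℝ _)
      (rootSet_derivative_subset_convexHull_rootSet hdeg (by simp [mem_rootSet, hS', hw]))
    exact heineStieltjes_roots_mem_convexHull ha hA hB heq hS x (by simpa [mem_rootSet] using hx)
  obtain ⟨f, hf⟩ := exists_forall_lt_of_notMem_convexHull (Set.finite_range ζ) hvK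
  have hvζ : v ∉ Set.range ζ := fun h ↦ hvK (subset_convexHull ℝ _ h)
  have hS'v : eval v (derivative S) ≠ 0 := fun h ↦ hvK (hS'K v h)
  have key : eval v A * eval v (derivative S) * ((1 : ℕ) *
      ((derivative S).roots.map fun w ↦ 1 / (v - w)).sum + ∑ l, (a l : ℂ) / (v - ζ l)) = 0 := by
    have := congrArg (eval v) heq
    rw [eval_add, eval_add, eval_mul, eval_mul, eval_mul, isRoot_of_mem_roots hv, zero_mul,
      add_zero, hB v hvζ, (IsAlgClosed.splits _).eval_derivative_eq_eval_mul_sum hS'v,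
      eval_zero] at this
    linear_combination this
  exact nat_mul_sum_one_div_sub_add_sum_div_sub_ne_zero f 1
    (fun w hw ↦ (hf w (hS'K w (isRoot_of_mem_roots hw))).le)
    (fun l ↦ hf _ (subset_convexHull ℝ _ ⟨l, rfl⟩)) ha
    ((mul_eq_zero.1 key).resolve_left (mul_ne_zero (hA v hvζ) hS'v))

end LameEquation

theorem polya_klein_bocher_general (p : ℕ) (hp : 2 ≤ p)
    (ζ : Fin p → ℂ) (a : Fin p → ℝ) (hapos : ∀ l, 0 < a l)
    (n : ℕ) (S V : Polynomial ℂ)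
    (hS : S.degree = (n : ℕ))
    (heq : (∏ l, (X - C (ζ l))) * derivative (derivative S) +
        (∑ l, C (a l : ℂ) * ∏ j ∈ Finset.univ.erase l, (X - C (ζ j))) * derivative S +
        V * S = 0) :
    (∀ v ∈ V.roots, v ∈ convexHull ℝ (Set.range ζ)) ∧
      (∀ s ∈ S.roots, s ∈ convexHull ℝ (Set.range ζ)) := by
  have : Nonempty (Fin p) := ⟨⟨0, by omega⟩⟩
  have hS0 : S ≠ 0 := fun h ↦ by simp [h] at hS
  have hA := fun z (hz : z ∉ Set.range ζ) ↦ eval_prod_X_sub_C_ne_zero hz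
  have hB := fun z (hz : z ∉ Set.range ζ) ↦ eval_sum_C_mul_prod_erase hz (fun l ↦ (a l : ℂ))
  exact ⟨vanVleck_roots_mem_convexHull hapos hA hB heq hS0,
    heineStieltjes_roots_mem_convexHull hapos hA hB heq hS0⟩

theorem polya_klein_bocher (p : ℕ) (hp : 2 ≤ p)
    (ζ : Fin p → ℂ) (a : Fin p → ℝ) (hapos : ∀ l, 0 < a l)
    (n : ℕ) (S V : Polynomial ℂ)
    (hS : S.degree = (n : ℕ)) (hV : V.degree = ((p - 2 : ℕ) : ℕ))
    (heq : (∏ l, (X - C (ζ l))) * derivative (derivative S) +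
        (∑ l, C (a l : ℂ) * ∏ j ∈ Finset.univ.erase l, (X - C (ζ j))) * derivative S +
        V * S = 0) :
    (∀ v ∈ V.roots, v ∈ convexHull ℝ (Set.range ζ)) ∧
      (∀ s ∈ S.roots, s ∈ convexHull ℝ (Set.range ζ)) :=
  polya_klein_bocher_general p hp ζ a hapos n S V hS heq
end
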